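/- The space G(E,F) of Grothendieck operators is closed in L(E,F) with respect to the operator norm. -/

import Mathlib

open Filter Topology

variable {E F : Type*}
  [NormedAddCommGroup E] [NormedSpace ℝ E] [CompleteSpace E]
  [NormedAddCommGroup F] [NormedSpace ℝ F] [CompleteSpace F]

/-- The adjoint `T' : F' → E'` of an operator `T : E → F`. -/
def adjOp (T : E →L[ℝ] F) (f : F →L[ℝ] ℝ) : E →L[ℝ] ℝ := f.comp T

/-- A sequence in the dual of `F` is weak*-null. -/
def WStarNull (f : ℕ → F →L[ℝ] ℝ) : Prop :=
  ∀ y : F, Tendsto (fun n => f n y) atTop (𝓝 0)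

/-- A sequence in the dual of `E` is weakly null (tested against all of `E''`). -/
def WNullDual (g : ℕ → E →L[ℝ] ℝ) : Prop :=
  ∀ G : (E →L[ℝ] ℝ) →L[ℝ] ℝ, Tendsto (fun n => G (g n)) atTop (𝓝 0)

/-- The space of Grothendieck operators (`T'` maps weak*-null sequences of `F'` to
weakly null sequences of `E'`) is closed in `L(E,F)` in the operator norm. -/
theorem grothendieck_isClosed :
    IsClosed {T : E →L[ℝ] F | ∀ f : ℕ → F →L[ℝ] ℝ, WStarNull f →
      WNullDual (fun n => adjOp T (f n))} := by
  rw [← isSeqClosed_iff_isClosed]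
  intro S T hS hST f hf G
  -- Banach–Steinhaus: the weak*-null sequence is norm-bounded
  obtain ⟨C, hC⟩ : ∃ C, ∀ n, ‖f n‖ ≤ C := by
    apply banach_steinhaus
    intro y
    obtain ⟨C, hC⟩ := ((hf y).norm.bddAbove_range)
    exact ⟨C, fun n => hC ⟨n, rfl⟩⟩
  have hCnn : 0 ≤ C := le_trans (norm_nonneg _) (hC 0)
  rw [Metric.tendsto_atTop]
  intro ε hε
  set D : ℝ := ‖G‖ * C + 1 with hD
  have hD0 : 0 < D := by positivity
  have hr : (0:ℝ) < ε / (2 * D) := by positivity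
  obtain ⟨k, hk⟩ : ∃ k, dist (S k) T < ε / (2 * D) :=
    (hST.eventually (Metric.ball_mem_nhds T hr)).exists
  have hk' : ‖T - S k‖ < ε / (2 * D) := by
    rwa [dist_eq_norm, ← norm_neg, neg_sub] at hk
  obtain ⟨N, hN⟩ := (Metric.tendsto_atTop.mp (hS k f hf G)) (ε / 2) (by positivity)
  refine ⟨N, fun n hn => ?_⟩
  have hNn := hN n hn
  rw [dist_zero_right] at hNn ⊢
  have hdiff : adjOp T (f n) - adjOp (S k) (f n) = (f n).comp (T - S k) := by
    simp [adjOp, ContinuousLinearMap.comp_sub]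
  have h1 : ‖G (adjOp T (f n)) - G (adjOp (S k) (f n))‖ ≤ ε / 2 := by
    rw [← map_sub, hdiff]
    calc ‖G ((f n).comp (T - S k))‖ ≤ ‖G‖ * ‖(f n).comp (T - S k)‖ :=
          G.le_opNorm _
      _ ≤ ‖G‖ * (‖f n‖ * ‖T - S k‖) := by
          apply mul_le_mul_of_nonneg_left (ContinuousLinearMap.opNorm_comp_le _ _)
            (norm_nonneg G)
      _ ≤ ‖G‖ * (C * (ε / (2 * D))) := by
          apply mul_le_mul_of_nonneg_left _ (norm_nonneg G)
          exact mul_le_mul (hC n) hk'.le (norm_nonneg _) hCnn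
      _ ≤ ε / 2 := by
          have h2 : ‖G‖ * C ≤ D := by simp [hD]
          have := mul_le_mul_of_nonneg_right h2 hr.le
          calc ‖G‖ * (C * (ε / (2 * D))) = (‖G‖ * C) * (ε / (2 * D)) := by ring
            _ ≤ D * (ε / (2 * D)) := this
            _ = ε / 2 := by field_simp
  calc ‖G (adjOp T (f n))‖
      ≤ ‖G (adjOp T (f n)) - G (adjOp (S k) (f n))‖ + ‖G (adjOp (S k) (f n))‖ := by
        simpa using norm_add_le (G (adjOp T (f n)) - G (adjOp (S k) (f n)))
          (G (adjOp (S k) (f n)))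
    _ < ε / 2 + ε / 2 := add_lt_add_of_le_of_lt h1 hNn
    _ = ε := by ring
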